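/- arXiv:1401.1639 — 4 statements merged into one kernel-verified Lean document; each statement's English description precedes it below -/
import Mathlib

section
/- Fix μ₀ ∈ ℝ, r ∈ ℝ, σ̄ > 0, and relative risk aversion α > 0. For κ ≥ 0, define the optimal portfolio under drift ambiguity [μ₀ − κ, μ₀ + κ] by π̂(κ) = (μ₀ − κ − r)/(ασ̄²) if μ₀ − κ > r, π̂(κ) = (μ₀ + κ − r)/(ασ̄²) if μ₀ + κ < r, and π̂(κ) = 0 otherwise. Then κ ↦ |π̂(κ)| is non-increasing on [0,∞), and π̂(κ) = 0 for all κ ≥ κ* := |μ₀ − r|. -/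
/-- Comparative statics: under drift ambiguity [μ₀-κ, μ₀+κ], the absolute optimal
portfolio |π̂(κ)| is non-increasing in κ, and π̂(κ) = 0 for κ ≥ κ* = |μ₀ - r|. -/
theorem stmt_5 (μ₀ r σu α : ℝ) (hσ : 0 < σu) (hα : 0 < α)
    (πhat : ℝ → ℝ)
    (hπ : ∀ κ, πhat κ =
      if r < μ₀ - κ then (μ₀ - κ - r) / (α * σu ^ 2)
      else if μ₀ + κ < r then (μ₀ + κ - r) / (α * σu ^ 2)
      else 0) :
    AntitoneOn (fun κ => |πhat κ|) (Set.Ici 0) ∧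
      ∀ κ, |μ₀ - r| ≤ κ → πhat κ = 0 := by
  have hc : 0 < α * σu ^ 2 := by positivity
  have key : ∀ κ, 0 ≤ κ → |πhat κ| = max (|μ₀ - r| - κ) 0 / (α * σu ^ 2) := by
    intro κ hκ
    rw [hπ]
    split_ifs with h1 h2
    · have habs : |μ₀ - r| = μ₀ - r := abs_of_pos (by linarith)
      rw [abs_of_nonneg (div_nonneg (by linarith) hc.le), habs, max_eq_left (by linarith)]
      ring_nf
    · have habs : |μ₀ - r| = -(μ₀ - r) := abs_of_neg (by linarith)
      rw [abs_of_nonpos (div_nonpos_of_nonpos_of_nonneg (by linarith) hc.le),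
        habs, max_eq_left (by linarith)]
      ring_nf
    · have habs : |μ₀ - r| ≤ κ := abs_le.mpr ⟨by linarith, by linarith⟩
      rw [abs_zero, max_eq_right (by linarith), zero_div]
  constructor
  · intro a ha b hb hab
    simp only [Set.mem_Ici] at ha hb
    simp only [key a ha, key b hb]
    have : max (|μ₀ - r| - b) 0 ≤ max (|μ₀ - r| - a) 0 := max_le_max (by linarith) le_rfl
    exact div_le_div_of_nonneg_right this hc.le
  · intro κ hκ
    rw [hπ]
    have h1 : ¬ (r < μ₀ - κ) := by
      push_neg; linarith [le_abs_self (μ₀ - r)]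
    have h2 : ¬ (μ₀ + κ < r) := by
      push_neg; linarith [neg_abs_le (μ₀ - r)]
    simp [h1, h2]
end

section
/- Let a < 0, b > 0, and reals r̲ ≤ r̄ ≤ μ̲ ≤ μ̄. Define f(π) = aπ² + bπ(μ̲ − r̄) + br̄ for π > 1, f(π) = aπ² + bπ(μ̲ − r̲) + br̲ for 0 ≤ π ≤ 1, and f(π) = aπ² + bπ(μ̄ − r̲) + br̲ for π < 0. If −b(μ̲ − r̄)/(2a) ≤ 1 ≤ −b(μ̲ − r̲)/(2a), then sup_{π∈ℝ} f(π) = f(1) = a + bμ̲, i.e. the supremum is attained at π̂ = 1. -/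
/-- Credit-market non-participation: under drift and interest-rate ambiguity,
if -b(μ̲-r̄)/(2a) ≤ 1 ≤ -b(μ̲-r̲)/(2a), then the sup of f is f(1) = a + bμ̲. -/
theorem stmt_9 (a b rl ru μl μu : ℝ) (ha : a < 0) (hb : 0 < b)
    (h1 : rl ≤ ru) (h2 : ru ≤ μl) (h3 : μl ≤ μu)
    (f : ℝ → ℝ)
    (hf : ∀ π, f π =
      if 1 < π then a * π ^ 2 + b * π * (μl - ru) + b * ru
      else if 0 ≤ π then a * π ^ 2 + b * π * (μl - rl) + b * rl
      else a * π ^ 2 + b * π * (μu - rl) + b * rl)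
    (hc : -b * (μl - ru) / (2 * a) ≤ 1 ∧ 1 ≤ -b * (μl - rl) / (2 * a)) :
    (∀ π, f π ≤ f 1) ∧ f 1 = a + b * μl := by
  have h2a : (2 : ℝ) * a < 0 := by linarith
  have k1 : 1 * (2 * a) ≤ -b * (μl - ru) := (div_le_iff_of_neg h2a).mp hc.1
  have k2 : -b * (μl - rl) ≤ 1 * (2 * a) := (le_div_iff_of_neg h2a).mp hc.2
  have hf1 : f 1 = a + b * μl := by
    rw [hf 1]
    norm_num; ring
  refine ⟨fun π => ?_, hf1⟩
  rw [hf π, hf1]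
  split_ifs with hπ1 hπ0
  · nlinarith [sq_nonneg (π - 1), sq_nonneg (π + 1)]
  · nlinarith [sq_nonneg (π - 1)]
  · push_neg at hπ0
    have hμ : rl ≤ μu := by linarith
    nlinarith [mul_nonneg (mul_nonneg hb.le (neg_nonneg.mpr hπ0.le)) (sub_nonneg.mpr hμ),
      mul_nonneg (sq_nonneg π) (neg_nonneg.mpr ha.le)]
end

section
/- Let a < 0, b > 0, and reals r̲ ≤ r̄ with μ̄ ≤ r̲ (hence μ̲ ≤ μ̄ ≤ r̲ ≤ r̄). Define f piecewise: f(π) = aπ² + bπ(μ̲ − r̄) + br̄ for π > 1, f(π) = aπ² + bπ(μ̲ − r̲) + br̲ for 0 ≤ π ≤ 1, f(π) = aπ² + bπ(μ̄ − r̲) + br̲ for π < 0. Then sup f is attained at π̂ = −b(μ̄ − r̲)/(2a) ≤ 0, with value br̲ − b²(μ̄ − r̲)²/(4a). -/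
/-- When even the highest drift is below the lowest interest rate (μ̄ ≤ r̲),
the investor goes short and saves: sup f attained at π̂ = -b(μ̄-r̲)/(2a) ≤ 0
with value br̲ - b²(μ̄-r̲)²/(4a). -/
theorem stmt_10 (a b rl ru μl μu : ℝ) (ha : a < 0) (hb : 0 < b)
    (hr : rl ≤ ru) (hμ : μl ≤ μu) (h : μu ≤ rl)
    (f : ℝ → ℝ)
    (hf : ∀ π, f π =
      if 1 < π then a * π ^ 2 + b * π * (μl - ru) + b * ru
      else if 0 ≤ π then a * π ^ 2 + b * π * (μl - rl) + b * rl
      else a * π ^ 2 + b * π * (μu - rl) + b * rl) :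
    -b * (μu - rl) / (2 * a) ≤ 0 ∧
    (∀ π, f π ≤ f (-b * (μu - rl) / (2 * a))) ∧
      f (-b * (μu - rl) / (2 * a)) = b * rl - b ^ 2 * (μu - rl) ^ 2 / (4 * a) := by
  have ha' : a ≠ 0 := ne_of_lt ha
  have hm0 : μu - rl ≤ 0 := by linarith
  have hπ : -b * (μu - rl) / (2 * a) ≤ 0 := by
    apply div_nonpos_of_nonneg_of_nonpos
    · nlinarith
    · linarith
  have hval : f (-b * (μu - rl) / (2 * a)) =
      b * rl - b ^ 2 * (μu - rl) ^ 2 / (4 * a) := by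
    rw [hf]
    rw [if_neg (by linarith)]
    by_cases h0 : 0 ≤ -b * (μu - rl) / (2 * a)
    · have heq : -b * (μu - rl) / (2 * a) = 0 := le_antisymm hπ h0
      have hbm : b * (μu - rl) = 0 := by
        have := heq
        field_simp at this
        linarith
      have hmz : μu - rl = 0 := by
        rcases mul_eq_zero.mp hbm with h' | h'
        · exact absurd h' (ne_of_gt hb)
        · exact h'
      rw [if_pos h0, heq, hmz]
      ring
    · rw [if_neg h0]
      field_simp
      ring
  refine ⟨hπ, ?_, hval⟩
  intro π
  rw [hval, hf π]
  have hV : 0 ≤ -(b ^ 2 * (μu - rl) ^ 2 / (4 * a)) := by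
    apply neg_nonneg.mpr
    apply div_nonpos_of_nonneg_of_nonpos
    · positivity
    · linarith
  have h4a : b ^ 2 * (μu - rl) ^ 2 / (4 * a) * (4 * a) = b ^ 2 * (μu - rl) ^ 2 := by
    field_simp
  split_ifs with h1 h2
  · -- π > 1
    have hpos : 0 ≤ (π - 1) * (-(a * (π + 1)) - b * (μl - ru)) := by
      apply mul_nonneg (by linarith)
      nlinarith
    nlinarith [mul_le_mul_of_nonneg_left hμ (le_of_lt hb)]
  · -- 0 ≤ π ≤ 1
    nlinarith [mul_nonneg h2 (sub_nonneg.mpr (le_trans hμ h)), mul_nonneg (mul_nonneg (neg_nonneg.mpr (le_of_lt ha)) h2) h2]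
  · -- π < 0
    nlinarith [sq_nonneg (2 * a * π + b * (μu - rl)), h4a, mul_pos (show (0:ℝ) < -(4 * a) by linarith) hb]
end

section
/- Let a < 0, b > 0, and reals with μ̲ < r̲ < μ̄ ≤ r̄. Define f piecewise: f(π) = aπ² + bπ(μ̲ − r̄) + br̄ for π > 1, f(π) = aπ² + bπ(μ̲ − r̲) + br̲ for 0 ≤ π ≤ 1, f(π) = aπ² + bπ(μ̄ − r̲) + br̲ for π < 0. Then sup_{π∈ℝ} f(π) = f(0) = br̲. -/
/-- Asset-market non-participation with interest-rate ambiguity: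
if μ̲ < r̲ < μ̄ ≤ r̄, then sup f = f(0) = br̲. -/
theorem stmt_11 (a b rl ru μl μu : ℝ) (ha : a < 0) (hb : 0 < b)
    (h1 : μl < rl) (h2 : rl < μu) (h3 : μu ≤ ru)
    (f : ℝ → ℝ)
    (hf : ∀ π, f π =
      if 1 < π then a * π ^ 2 + b * π * (μl - ru) + b * ru
      else if 0 ≤ π then a * π ^ 2 + b * π * (μl - rl) + b * rl
      else a * π ^ 2 + b * π * (μu - rl) + b * rl) :
    (∀ π, f π ≤ f 0) ∧ f 0 = b * rl := by
  have h0 : f 0 = b * rl := by rw [hf 0]; norm_num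
  refine ⟨fun π => ?_, h0⟩
  rw [hf π, h0]
  split_ifs with hπ1 hπ0
  · nlinarith [sq_nonneg π, mul_pos (mul_pos hb (sub_pos.mpr hπ1)) (sub_pos.mpr (h1.trans_le (h2.le.trans h3)))]
  · nlinarith [sq_nonneg π, mul_nonneg (mul_nonneg hb.le hπ0) (sub_nonneg.mpr h1.le)]
  · nlinarith [sq_nonneg π, mul_nonneg (mul_nonneg hb.le (neg_nonneg.mpr (le_of_not_ge hπ0))) (sub_nonneg.mpr h2.le)]
end
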